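/- The operator i(σ₀₁ ⊗ σ₁₀^⊗(j-1) − σ₁₀ ⊗ σ₀₁^⊗(j-1)) on j qubits equals U_j(−π/2) (Z ⊗ σ₁₁^⊗(j-1)) U_j(−π/2)†, where U_j(λ) = (∏_{m=1}^{j-1} CNOT_m^j) · P_j(λ) · H_j. -/

import Mathlib

open Matrix Complex

noncomputable section

lemma tens_bpos {a b : ℕ} (i : Fin (a * b)) : 0 < b :=
  Nat.pos_of_ne_zero fun h => absurd i.isLt (by simp [h])

/-- Kronecker (tensor) product of square matrices, with the leftmost factor acting on
the most significant part of the index. -/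
def tens {a b : ℕ} (A : Matrix (Fin a) (Fin a) ℂ) (B : Matrix (Fin b) (Fin b) ℂ) :
    Matrix (Fin (a * b)) (Fin (a * b)) ℂ := fun i j =>
  A ⟨i.val / b, Nat.div_lt_of_lt_mul (i.isLt.trans_eq (Nat.mul_comm a b))⟩
      ⟨j.val / b, Nat.div_lt_of_lt_mul (j.isLt.trans_eq (Nat.mul_comm a b))⟩ *
    B ⟨i.val % b, Nat.mod_lt _ (tens_bpos i)⟩ ⟨j.val % b, Nat.mod_lt _ (tens_bpos j)⟩

def I2 : Matrix (Fin 2) (Fin 2) ℂ := 1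
def s00 : Matrix (Fin 2) (Fin 2) ℂ := !![1, 0; 0, 0]
def s01 : Matrix (Fin 2) (Fin 2) ℂ := !![0, 1; 0, 0]
def s10 : Matrix (Fin 2) (Fin 2) ℂ := !![0, 0; 1, 0]
def s11 : Matrix (Fin 2) (Fin 2) ℂ := !![0, 0; 0, 1]
def pauliX : Matrix (Fin 2) (Fin 2) ℂ := !![0, 1; 1, 0]
def pauliZ : Matrix (Fin 2) (Fin 2) ℂ := !![1, 0; 0, -1]

/-- `k`-fold tensor power of a one-qubit operator. -/
def tensPow (M : Matrix (Fin 2) (Fin 2) ℂ) : (k : ℕ) → Matrix (Fin (2 ^ k)) (Fin (2 ^ k)) ℂ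
  | 0 => 1
  | k + 1 => tens (tensPow M k) M

lemma pow_split {n j : ℕ} (h1 : 1 ≤ j) (h2 : j ≤ n) :
    2 ^ (n - j) * 2 * 2 ^ (j - 1) = 2 ^ n := by
  rw [mul_assoc, ← pow_succ', ← pow_add]; congr 1; omega

lemma two_pow_split {j : ℕ} (h : 1 ≤ j) : 2 * 2 ^ (j - 1) = 2 ^ j := by
  rw [← pow_succ']; congr 1; omega

/-- The backward shift operator `S⁻` : entries `S⁻[k-1,k] = 1`. -/
def Sminus (n : ℕ) : Matrix (Fin (2 ^ n)) (Fin (2 ^ n)) ℂ := fun i j =>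
  if i.val + 1 = j.val then 1 else 0

/-- The forward shift operator `S⁺` : entries `S⁺[k,k-1] = 1`. -/
def Splus (n : ℕ) : Matrix (Fin (2 ^ n)) (Fin (2 ^ n)) ℂ := fun i j =>
  if j.val + 1 = i.val then 1 else 0

/-- `A_j = i·I^⊗(n-j) ⊗ (σ₀₁ ⊗ σ₁₀^⊗(j-1) − σ₁₀ ⊗ σ₀₁^⊗(j-1))` acting on `(ℂ²)^⊗n`. -/
def Amat (n j : ℕ) : Matrix (Fin (2 ^ n)) (Fin (2 ^ n)) ℂ :=
  if h : 1 ≤ j ∧ j ≤ n then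
    Complex.I • (Matrix.reindex (finCongr (pow_split h.1 h.2)) (finCongr (pow_split h.1 h.2))
      (tens (tens (tensPow I2 (n - j)) s01) (tensPow s10 (j - 1)) -
        tens (tens (tensPow I2 (n - j)) s10) (tensPow s01 (j - 1))))
  else 0

/-- Spectral (operator) norm of a square complex matrix. -/
def specNorm {m : ℕ} (M : Matrix (Fin m) (Fin m) ℂ) : ℝ :=
  ‖Matrix.toEuclideanCLM (𝕜 := ℂ) M‖


/-- CNOT on `j` qubits with the first (most significant) qubit as control and the
`m`-th of the remaining qubits as target. -/
def cnot1 (j m : ℕ) : Matrix (Fin (2 ^ j)) (Fin (2 ^ j)) ℂ := fun i k =>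
  if i.val = (if Nat.testBit k.val (j - 1) then k.val ^^^ 2 ^ (j - 1 - m) else k.val) then 1
  else 0

def phaseGate (lam : ℝ) : Matrix (Fin 2) (Fin 2) ℂ :=
  !![1, 0; 0, Complex.exp (Complex.I * lam)]

def hadamard : Matrix (Fin 2) (Fin 2) ℂ := ((1 / Real.sqrt 2 : ℝ) : ℂ) • !![1, 1; 1, -1]

/-- `U_j(λ) = (∏_{m=1}^{j-1} CNOT_m^j) · P_j(λ) · H_j` on `j` qubits, with `P` and `H`
acting on the first (most significant) qubit. -/
def Uop (j : ℕ) (lam : ℝ) : Matrix (Fin (2 ^ j)) (Fin (2 ^ j)) ℂ :=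
  if h : 1 ≤ j then
    (((List.range (j - 1)).map fun m => cnot1 j (m + 1)).prod) *
      Matrix.reindex (finCongr (two_pow_split h)) (finCongr (two_pow_split h))
        (tens (phaseGate lam * hadamard) (tensPow I2 (j - 1)))
  else 1

-- AUX LEMMAS (to be inserted above the theorem)

lemma s01_apply (a b : Fin 2) : s01 a b = if a.val = 0 ∧ b.val = 1 then 1 else 0 := by
  fin_cases a <;> fin_cases b <;> simp [s01]

lemma s10_apply (a b : Fin 2) : s10 a b = if a.val = 1 ∧ b.val = 0 then 1 else 0 := by
  fin_cases a <;> fin_cases b <;> simp [s10]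

lemma s11_apply (a b : Fin 2) : s11 a b = if a.val = 1 ∧ b.val = 1 then 1 else 0 := by
  fin_cases a <;> fin_cases b <;> simp [s11]

lemma tensPow_s10_apply (k : ℕ) (p q : Fin (2 ^ k)) :
    tensPow s10 k p q = if p.val = 2 ^ k - 1 ∧ q.val = 0 then 1 else 0 := by
  induction k with
  | zero =>
    have hp := p.isLt
    have hq := q.isLt
    simp only [pow_zero] at hp hq
    show (1 : Matrix (Fin (2^0)) (Fin (2^0)) ℂ) p q = _
    rw [Matrix.one_apply]
    simp only [Fin.ext_iff]
    split_ifs <;> simp_all <;> omega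
  | succ k ih =>
    have hp := p.isLt
    have hq := q.isLt
    have h2 : (0:ℕ) < 2 ^ k := Nat.two_pow_pos k
    have hpow : (2:ℕ) ^ (k+1) = 2 ^ k * 2 := by ring
    show tens (tensPow s10 k) s10 p q = _
    unfold tens
    rw [ih, s10_apply]
    simp only [Fin.val_mk]
    split_ifs with h1 h2' h3 h3 <;> try ring
    all_goals exfalso; omega

lemma tensPow_s01_apply (k : ℕ) (p q : Fin (2 ^ k)) :
    tensPow s01 k p q = if p.val = 0 ∧ q.val = 2 ^ k - 1 then 1 else 0 := by
  induction k with
  | zero =>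
    have hp := p.isLt
    have hq := q.isLt
    simp only [pow_zero] at hp hq
    show (1 : Matrix (Fin (2^0)) (Fin (2^0)) ℂ) p q = _
    rw [Matrix.one_apply]
    simp only [Fin.ext_iff]
    split_ifs <;> simp_all <;> omega
  | succ k ih =>
    have hp := p.isLt
    have hq := q.isLt
    have h2 : (0:ℕ) < 2 ^ k := Nat.two_pow_pos k
    have hpow : (2:ℕ) ^ (k+1) = 2 ^ k * 2 := by ring
    show tens (tensPow s01 k) s01 p q = _
    unfold tens
    rw [ih, s01_apply]
    simp only [Fin.val_mk]
    split_ifs with h1 h2' h3 h3 <;> try ring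
    all_goals exfalso; omega

lemma tensPow_s11_apply (k : ℕ) (p q : Fin (2 ^ k)) :
    tensPow s11 k p q = if p.val = 2 ^ k - 1 ∧ q.val = 2 ^ k - 1 then 1 else 0 := by
  induction k with
  | zero =>
    have hp := p.isLt
    have hq := q.isLt
    simp only [pow_zero] at hp hq
    show (1 : Matrix (Fin (2^0)) (Fin (2^0)) ℂ) p q = _
    rw [Matrix.one_apply]
    simp only [Fin.ext_iff]
    split_ifs <;> simp_all <;> omega
  | succ k ih =>
    have hp := p.isLt
    have hq := q.isLt
    have h2 : (0:ℕ) < 2 ^ k := Nat.two_pow_pos k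
    have hpow : (2:ℕ) ^ (k+1) = 2 ^ k * 2 := by ring
    show tens (tensPow s11 k) s11 p q = _
    unfold tens
    rw [ih, s11_apply]
    simp only [Fin.val_mk]
    split_ifs with h1 h2' h3 h3 <;> try ring
    all_goals exfalso; omega

lemma tensPow_I2_apply (k : ℕ) (p q : Fin (2 ^ k)) :
    tensPow I2 k p q = if p.val = q.val then 1 else 0 := by
  induction k with
  | zero =>
    have hp := p.isLt
    have hq := q.isLt
    simp only [pow_zero] at hp hq
    show (1 : Matrix (Fin (2^0)) (Fin (2^0)) ℂ) p q = _
    simp [Matrix.one_apply, Fin.ext_iff]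
  | succ k ih =>
    have hp := p.isLt
    have hq := q.isLt
    have h2 : (0:ℕ) < 2 ^ k := Nat.two_pow_pos k
    have hpow : (2:ℕ) ^ (k+1) = 2 ^ k * 2 := by ring
    have hI2 : ∀ a b : Fin 2, I2 a b = if a.val = b.val then 1 else 0 := by
      intro a b; fin_cases a <;> fin_cases b <;> simp [I2]
    show tens (tensPow I2 k) I2 p q = _
    unfold tens
    rw [ih, hI2]
    simp only [Fin.val_mk]
    split_ifs with h1 h2' h3 h3 <;> try ring
    all_goals exfalso; omega

lemma pow_sub_testBit (a b i : ℕ) (h : b ≤ a) :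
    Nat.testBit (2 ^ a - 2 ^ b) i = decide (b ≤ i ∧ i < a) := by
  have hab : 2 ^ a - 2 ^ b = 2 ^ b * (2 ^ (a - b) - 1) := by
    rw [Nat.mul_sub, mul_one, ← pow_add]
    congr 2
    omega
  rw [hab, Nat.testBit_two_pow_mul, Nat.testBit_two_pow_sub_one]
  have hmono : ∀ x y : ℕ, x ≤ y → 2 ^ x ≤ 2 ^ y := fun x y hxy =>
    Nat.pow_le_pow_right (by norm_num) hxy
  by_cases h1 : b ≤ i <;> by_cases h2 : i < a <;> simp [h1, h2] <;> omega

lemma xor_key (a e : ℕ) (h : e + 1 ≤ a) : 2 ^ e ^^^ (2 ^ a - 2 ^ (e + 1)) = 2 ^ a - 2 ^ e := by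
  apply Nat.eq_of_testBit_eq
  intro i
  rw [Nat.testBit_xor, Nat.testBit_two_pow, pow_sub_testBit _ _ _ h,
    pow_sub_testBit _ _ _ (by omega)]
  by_cases h1 : e = i <;> by_cases h2 : e + 1 ≤ i <;> by_cases h3 : i < a <;>
    simp [h1, h2, h3] <;> omega

/-- The map implemented by the product of the first `t` CNOTs. -/
def sig (j t x : ℕ) : ℕ :=
  if Nat.testBit x (j - 1) then x ^^^ (2 ^ (j - 1) - 2 ^ (j - 1 - t)) else x

lemma sig_lt (j t x : ℕ) (hx : x < 2 ^ j) : sig j t x < 2 ^ j := by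
  rw [sig]
  split_ifs with hb
  · refine Nat.xor_lt_two_pow hx ?_
    have h1 : (2:ℕ) ^ (j - 1) ≤ 2 ^ j := Nat.pow_le_pow_right (by norm_num) (by omega)
    have h2 : (0:ℕ) < 2 ^ (j - 1 - t) := Nat.two_pow_pos _
    omega
  · exact hx

lemma cnot_prod_aux (j : ℕ) (hj : 1 ≤ j) : ∀ (t : ℕ), t ≤ j - 1 → ∀ (i k : Fin (2 ^ j)),
    (((List.range t).map fun m => cnot1 j (m + 1)).prod) i k
      = if i.val = sig j t k.val then 1 else 0 := by
  intro t
  induction t with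
  | zero =>
    intro ht i k
    have hsig : sig j 0 k.val = k.val := by
      rw [sig]
      split_ifs <;> simp
    rw [hsig, List.range_zero, List.map_nil, List.prod_nil, Matrix.one_apply]
    simp [Fin.ext_iff]
  | succ t ih =>
    intro ht i k
    rw [List.range_succ, List.map_append, List.prod_append, List.map_singleton,
      List.prod_singleton, Matrix.mul_apply]
    -- the target state of the new CNOT
    set y : ℕ := if Nat.testBit k.val (j - 1) then k.val ^^^ 2 ^ (j - 1 - (t + 1)) else k.val
      with hy
    have hylt : y < 2 ^ j := by
      rw [hy]
      split_ifs with hb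
      · refine Nat.xor_lt_two_pow k.isLt (Nat.pow_lt_pow_right (by norm_num) (by omega))
      · exact k.isLt
    rw [Finset.sum_eq_single (⟨y, hylt⟩ : Fin (2 ^ j))]
    · rw [cnot1]
      simp only [← hy]
      rw [ih (by omega)]
      have hkey : sig j t y = sig j (t + 1) k.val := by
        by_cases hb : Nat.testBit k.val (j - 1)
        · have hy' : y = k.val ^^^ 2 ^ (j - 1 - (t + 1)) := by rw [hy, if_pos hb]
          have hj2 : 2 ≤ j := by omega
          have he : j - 1 - (t + 1) < j - 1 := by omega
          have hby : Nat.testBit y (j - 1) = true := by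
            rw [hy', Nat.testBit_xor, hb, Nat.testBit_two_pow, decide_eq_false (by omega)]
            rfl
          rw [sig, sig, if_pos hby, if_pos hb, hy', Nat.xor_assoc]
          congr 1
          have : j - 1 - t = (j - 1 - (t + 1)) + 1 := by omega
          rw [this]
          exact xor_key _ _ (by omega)
        · have hy' : y = k.val := by rw [hy, if_neg hb]
          rw [hy', sig, sig, if_neg hb, if_neg hb]
      rw [hkey]
      simp
    · intro b _ hbne
      rw [cnot1]
      simp only [← hy]
      rw [if_neg, mul_zero]
      intro hc
      exact hbne (Fin.ext hc)
    · intro habs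
      exact absurd (Finset.mem_univ _) habs

/-- Matrix unit: 1 at entry `(u, v)`, 0 elsewhere. -/
def EE (n u v : ℕ) : Matrix (Fin n) (Fin n) ℂ := fun a b =>
  if a.val = u ∧ b.val = v then 1 else 0

lemma mul_EE_mul {n u v : ℕ} (hu : u < n) (hv : v < n)
    (A B : Matrix (Fin n) (Fin n) ℂ) (i k : Fin n) :
    (A * EE n u v * B) i k = A i ⟨u, hu⟩ * B ⟨v, hv⟩ k := by
  rw [Matrix.mul_apply]
  have hAE : ∀ b : Fin n, (A * EE n u v) i b = if b.val = v then A i ⟨u, hu⟩ else 0 := by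
    intro b
    rw [Matrix.mul_apply]
    rw [Finset.sum_eq_single (⟨u, hu⟩ : Fin n)]
    · rw [EE]
      simp only [Fin.val_mk]
      split_ifs with h1 h2 h2 <;> simp_all
    · intro a _ hane
      rw [EE, if_neg, mul_zero]
      rintro ⟨h1, -⟩
      exact hane (Fin.ext h1)
    · intro habs
      exact absurd (Finset.mem_univ _) habs
  simp only [hAE]
  rw [Finset.sum_eq_single (⟨v, hv⟩ : Fin n)]
  · simp
  · intro b _ hbne
    rw [if_neg, zero_mul]
    intro h1
    exact hbne (Fin.ext h1)
  · intro habs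
    exact absurd (Finset.mem_univ _) habs

lemma exp_neg_pi_half : Complex.exp (Complex.I * ((-(Real.pi / 2) : ℝ) : ℂ)) = -Complex.I := by
  rw [mul_comm, Complex.exp_mul_I, ← Complex.ofReal_cos, ← Complex.ofReal_sin]
  simp [Real.cos_pi_div_two, Real.sin_pi_div_two]

lemma PH_eq : phaseGate (-(Real.pi / 2)) * _root_.hadamard =
    ((1 / Real.sqrt 2 : ℝ) : ℂ) • !![1, 1; -Complex.I, Complex.I] := by
  rw [phaseGate, exp_neg_pi_half, _root_.hadamard, Matrix.mul_smul, Matrix.mul_fin_two]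
  congr 1
  norm_num

lemma Gvals (a b : Fin 2) :
    (phaseGate (-(Real.pi / 2)) * _root_.hadamard) a 0
        * star ((phaseGate (-(Real.pi / 2)) * _root_.hadamard) b 0)
      - (phaseGate (-(Real.pi / 2)) * _root_.hadamard) a 1
        * star ((phaseGate (-(Real.pi / 2)) * _root_.hadamard) b 1)
      = if a.val = 0 ∧ b.val = 1 then Complex.I
        else if a.val = 1 ∧ b.val = 0 then -Complex.I else 0 := by
  have hmul : ((Real.sqrt 2 : ℝ) : ℂ) * ((Real.sqrt 2 : ℝ) : ℂ) = 2 := by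
    norm_cast
    exact Real.mul_self_sqrt (by norm_num)
  have hinv : ((Real.sqrt 2 : ℝ) : ℂ)⁻¹ * ((Real.sqrt 2 : ℝ) : ℂ)⁻¹ = 1 / 2 := by
    rw [← mul_inv, hmul]
    norm_num
  rw [PH_eq]
  fin_cases a <;> fin_cases b <;>
    simp [Matrix.smul_apply, smul_eq_mul, Complex.conj_ofReal, _root_.map_mul,
      Complex.conj_I, star_neg] <;>
    try ring
  all_goals
    first
    | linear_combination 2 * Complex.I * hinv
    | linear_combination (-2) * Complex.I * hinv

lemma dm_facts (N a : ℕ) (hN : 0 < N) (ha : a < 2 * N) :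
    (a / N = 0 ∧ a % N = a ∧ a < N) ∨ (a / N = 1 ∧ a % N = a - N ∧ N ≤ a) := by
  rcases Nat.lt_or_ge a N with h | h
  · exact Or.inl ⟨Nat.div_eq_of_lt h, Nat.mod_eq_of_lt h, h⟩
  · right
    have h2 : a = (a - N) + 1 * N := by omega
    refine ⟨?_, ?_, h⟩
    · rw [h2, Nat.add_mul_div_right _ _ hN, Nat.div_eq_of_lt (by omega)]
    · rw [Nat.mod_eq_sub_mod h, Nat.mod_eq_of_lt (by omega)]

lemma div2lt {j : ℕ} (hj : 1 ≤ j) (i : Fin (2 ^ j)) : i.val / 2 ^ (j - 1) < 2 :=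
  Nat.div_lt_of_lt_mul (by have := i.isLt; have := two_pow_split hj; omega)

lemma W_apply (j : ℕ) (hj : 1 ≤ j) (i b : Fin (2 ^ j)) :
    (Matrix.reindex (finCongr (two_pow_split hj)) (finCongr (two_pow_split hj))
        (tens (phaseGate (-(Real.pi / 2)) * _root_.hadamard) (tensPow I2 (j - 1)))) i b
      = (phaseGate (-(Real.pi / 2)) * _root_.hadamard)
            ⟨i.val / 2 ^ (j - 1), div2lt hj i⟩ ⟨b.val / 2 ^ (j - 1), div2lt hj b⟩
        * (if i.val % 2 ^ (j - 1) = b.val % 2 ^ (j - 1) then 1 else 0) := by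
  rw [Matrix.reindex_apply, Matrix.submatrix_apply]
  simp only [finCongr_symm, finCongr_apply, tens, tensPow_I2_apply, Fin.coe_cast]

lemma hs_one (j : ℕ) (hj : 1 ≤ j) : sig j (j - 1) (2 ^ (j - 1) - 1) = 2 ^ (j - 1) - 1 := by
  rw [sig, if_neg]
  rw [Nat.testBit_two_pow_sub_one]
  simp

lemma hs_two (j : ℕ) (hj : 1 ≤ j) : sig j (j - 1) (2 ^ j - 1) = 2 ^ (j - 1) := by
  have h2j := two_pow_split hj
  rw [sig, if_pos]
  · have hjj : j - 1 - (j - 1) = 0 := by omega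
    rw [hjj, pow_zero]
    have h1 : (1:ℕ) = 2 ^ 0 := rfl
    apply Nat.eq_of_testBit_eq
    intro i
    rw [Nat.testBit_xor, Nat.testBit_two_pow_sub_one, h1,
      pow_sub_testBit _ _ _ (by omega), Nat.testBit_two_pow]
    by_cases h1 : i < j <;> by_cases h2 : 0 ≤ i ∧ i < j - 1 <;> by_cases h3 : j - 1 = i <;>
      simp [h1, h2, h3] <;> omega
  · rw [Nat.testBit_two_pow_sub_one]
    simp
    omega

lemma Dform (j : ℕ) (hj : 1 ≤ j) :
    Matrix.reindex (finCongr (two_pow_split hj)) (finCongr (two_pow_split hj))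
        (tens pauliZ (tensPow s11 (j - 1)))
      = EE (2 ^ j) (2 ^ (j - 1) - 1) (2 ^ (j - 1) - 1) - EE (2 ^ j) (2 ^ j - 1) (2 ^ j - 1) := by
  have h2j := two_pow_split hj
  have hN : 0 < 2 ^ (j - 1) := Nat.two_pow_pos _
  have hZ : ∀ x y : Fin 2, pauliZ x y
      = (if x.val = 0 ∧ y.val = 0 then (1:ℂ) else 0)
        - (if x.val = 1 ∧ y.val = 1 then 1 else 0) := by
    intro x y; fin_cases x <;> fin_cases y <;> norm_num [pauliZ]
  ext a b
  have dma := dm_facts (2 ^ (j - 1)) a.val hN (by have := a.isLt; omega)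
  have dmb := dm_facts (2 ^ (j - 1)) b.val hN (by have := b.isLt; omega)
  rw [Matrix.reindex_apply, Matrix.submatrix_apply, Matrix.sub_apply]
  simp only [finCongr_symm, finCongr_apply, tens, tensPow_s11_apply, hZ, EE,
    Fin.coe_cast, Fin.val_mk]
  split_ifs <;> try norm_num
  all_goals exfalso; omega

lemma Lform (j : ℕ) (hj : 1 ≤ j) :
    Matrix.reindex (finCongr (two_pow_split hj)) (finCongr (two_pow_split hj))
        (tens s01 (tensPow s10 (j - 1)) - tens s10 (tensPow s01 (j - 1)))
      = EE (2 ^ j) (2 ^ (j - 1) - 1) (2 ^ (j - 1)) - EE (2 ^ j) (2 ^ (j - 1)) (2 ^ (j - 1) - 1) := by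
  have h2j := two_pow_split hj
  have hN : 0 < 2 ^ (j - 1) := Nat.two_pow_pos _
  ext a b
  have dma := dm_facts (2 ^ (j - 1)) a.val hN (by have := a.isLt; omega)
  have dmb := dm_facts (2 ^ (j - 1)) b.val hN (by have := b.isLt; omega)
  rw [Matrix.reindex_apply, Matrix.submatrix_apply, Matrix.sub_apply, Matrix.sub_apply]
  simp only [finCongr_symm, finCongr_apply, tens, s01_apply, s10_apply, tensPow_s10_apply,
    tensPow_s01_apply, EE, Fin.coe_cast, Fin.val_mk]
  split_ifs <;> try norm_num
  all_goals exfalso; omega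

lemma Cconj (j : ℕ) (hj : 1 ≤ j) (u v : ℕ) (hu : u < 2 ^ j) (hv : v < 2 ^ j) :
    (((List.range (j - 1)).map fun m => cnot1 j (m + 1)).prod) * EE (2 ^ j) u v *
        (((List.range (j - 1)).map fun m => cnot1 j (m + 1)).prod)ᴴ
      = EE (2 ^ j) (sig j (j - 1) u) (sig j (j - 1) v) := by
  have hCap : ∀ i k : Fin (2 ^ j),
      (((List.range (j - 1)).map fun m => cnot1 j (m + 1)).prod) i k
        = if i.val = sig j (j - 1) k.val then 1 else 0 :=
    fun i k => cnot_prod_aux j hj (j - 1) le_rfl i k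
  ext i k
  rw [mul_EE_mul hu hv, Matrix.conjTranspose_apply, hCap, hCap]
  simp only [Fin.val_mk, EE, apply_ite (star : ℂ → ℂ), star_one, star_zero]
  split_ifs <;> simp_all

lemma Wconj (j : ℕ) (hj : 1 ≤ j) :
    (Matrix.reindex (finCongr (two_pow_split hj)) (finCongr (two_pow_split hj))
        (tens (phaseGate (-(Real.pi / 2)) * _root_.hadamard) (tensPow I2 (j - 1)))) *
      (EE (2 ^ j) (2 ^ (j - 1) - 1) (2 ^ (j - 1) - 1) - EE (2 ^ j) (2 ^ j - 1) (2 ^ j - 1)) *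
      (Matrix.reindex (finCongr (two_pow_split hj)) (finCongr (two_pow_split hj))
        (tens (phaseGate (-(Real.pi / 2)) * _root_.hadamard) (tensPow I2 (j - 1))))ᴴ
      = Complex.I • (EE (2 ^ j) (2 ^ (j - 1) - 1) (2 ^ j - 1)
          - EE (2 ^ j) (2 ^ j - 1) (2 ^ (j - 1) - 1)) := by
  have h2j := two_pow_split hj
  have hN : 0 < 2 ^ (j - 1) := Nat.two_pow_pos _
  have hlt1 : 2 ^ (j - 1) - 1 < 2 ^ j := by omega
  have hlt2 : 2 ^ j - 1 < 2 ^ j := by omega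
  have e1 : (2 ^ (j - 1) - 1) / 2 ^ (j - 1) = 0 := Nat.div_eq_of_lt (by omega)
  have e2 : (2 ^ (j - 1) - 1) % 2 ^ (j - 1) = 2 ^ (j - 1) - 1 := Nat.mod_eq_of_lt (by omega)
  have e3 : (2 ^ j - 1) / 2 ^ (j - 1) = 1 := by
    have h : 2 ^ j - 1 = (2 ^ (j - 1) - 1) + 1 * 2 ^ (j - 1) := by omega
    rw [h, Nat.add_mul_div_right _ _ hN, Nat.div_eq_of_lt (by omega)]
  have e4 : (2 ^ j - 1) % 2 ^ (j - 1) = 2 ^ (j - 1) - 1 := by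
    have h : 2 ^ j - 1 = (2 ^ (j - 1) - 1) + 1 * 2 ^ (j - 1) := by omega
    rw [h, Nat.add_mul_mod_self_right, Nat.mod_eq_of_lt (by omega)]
  rw [Matrix.mul_sub, Matrix.sub_mul]
  ext i k
  have dmi := dm_facts (2 ^ (j - 1)) i.val hN (by have := i.isLt; omega)
  have dmk := dm_facts (2 ^ (j - 1)) k.val hN (by have := k.isLt; omega)
  rw [Matrix.sub_apply, mul_EE_mul hlt1 hlt1 _ _ i k, mul_EE_mul hlt2 hlt2 _ _ i k,
    Matrix.conjTranspose_apply, Matrix.conjTranspose_apply,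
    W_apply j hj, W_apply j hj, W_apply j hj, W_apply j hj]
  simp only [Fin.val_mk, e1, e2, e3, e4, Fin.mk_zero, Fin.mk_one,
    star_mul', apply_ite (star : ℂ → ℂ), star_one, star_zero,
    Matrix.smul_apply, Matrix.sub_apply, EE, smul_eq_mul]
  by_cases hii : i.val % 2 ^ (j - 1) = 2 ^ (j - 1) - 1 <;>
    by_cases hkk : k.val % 2 ^ (j - 1) = 2 ^ (j - 1) - 1 <;>
    simp only [hii, hkk, if_true, if_false, eq_self_iff_true, if_pos rfl, mul_one, mul_zero,
      zero_mul, sub_zero, zero_sub]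
  · rw [Gvals]
    simp only [Fin.val_mk]
    split_ifs <;> try norm_num
    all_goals exfalso; omega
  all_goals
    rw [if_neg (by omega), if_neg (by omega)]
    norm_num

/-- `i(σ₀₁ ⊗ σ₁₀^⊗(j-1) − σ₁₀ ⊗ σ₀₁^⊗(j-1)) = U_j(−π/2) (Z ⊗ σ₁₁^⊗(j-1)) U_j(−π/2)†`. -/
theorem conjugation_identity (j : ℕ) (hj : 1 ≤ j) :
    Complex.I • (Matrix.reindex (finCongr (two_pow_split hj)) (finCongr (two_pow_split hj))
        (tens s01 (tensPow s10 (j - 1)) - tens s10 (tensPow s01 (j - 1)))) =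
      Uop j (-(Real.pi / 2)) *
        Matrix.reindex (finCongr (two_pow_split hj)) (finCongr (two_pow_split hj))
          (tens pauliZ (tensPow s11 (j - 1))) *
        (Uop j (-(Real.pi / 2)))ᴴ := by
  have h2j := two_pow_split hj
  have hN : 0 < 2 ^ (j - 1) := Nat.two_pow_pos _
  have hlt1 : 2 ^ (j - 1) - 1 < 2 ^ j := by omega
  have hlt2 : 2 ^ j - 1 < 2 ^ j := by omega
  have hU : Uop j (-(Real.pi / 2))
      = (((List.range (j - 1)).map fun m => cnot1 j (m + 1)).prod) *
        Matrix.reindex (finCongr (two_pow_split hj)) (finCongr (two_pow_split hj))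
          (tens (phaseGate (-(Real.pi / 2)) * _root_.hadamard) (tensPow I2 (j - 1))) := by
    rw [Uop, dif_pos hj]
  have step : ∀ Cm Wm E1 E2 : Matrix (Fin (2 ^ j)) (Fin (2 ^ j)) ℂ,
      Cm * Wm * (E1 - E2) * (Wm ᴴ * Cmᴴ) = Cm * (Wm * (E1 - E2) * Wmᴴ) * Cmᴴ := by
    intros Cm Wm E1 E2
    simp only [Matrix.mul_assoc]
  rw [Lform j hj, hU, Dform j hj, Matrix.conjTranspose_mul, step, Wconj j hj,
    Matrix.mul_smul, Matrix.smul_mul, Matrix.mul_sub, Matrix.sub_mul,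
    Cconj j hj _ _ hlt1 hlt2, Cconj j hj _ _ hlt2 hlt1, hs_one j hj, hs_two j hj]

end
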